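/- The gradient-based contribution function ctrb^g violates the contribution existence principle (and hence the quantitative contribution existence principle) with respect to each of the DFQuAD, SD-DFQuAD, and EBT semantics: for each of these three semantics there exist an acyclic QBAG G and an argument a ∈ A such that σ_G(a) ≠ τ(a) yet ctrb^g_{G,a}(x) = 0 for all x ∈ A∖{a}. (A witness is the QBAG with A = {a, b, c}, τ(a) = 0.5, τ(b) = τ(c) = 1, and attacks (b,a), (c,a).) -/

import Mathlib

open Finset

/-- A quantitative bipolar argumentation graph (QBAG): a finite set of arguments,
an initial strength function, and attack and support relations. -/
structure QBAG where
  args : Finset ℕ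
  tau : ℕ → ℝ
  att : Finset (ℕ × ℕ)
  supp : Finset (ℕ × ℕ)

namespace QBAG

/-- The edge relation of the underlying directed graph (attack or support). -/
def edge (G : QBAG) (x y : ℕ) : Prop := (x, y) ∈ G.att ∨ (x, y) ∈ G.supp

/-- Well-formedness: edges live on the arguments, attack and support are disjoint,
and initial strengths lie in [0,1]. -/
def WF (G : QBAG) : Prop :=
  (∀ p ∈ G.att, p.1 ∈ G.args ∧ p.2 ∈ G.args) ∧
  (∀ p ∈ G.supp, p.1 ∈ G.args ∧ p.2 ∈ G.args) ∧
  Disjoint G.att G.supp ∧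
  (∀ a ∈ G.args, G.tau a ∈ Set.Icc (0 : ℝ) 1)

/-- Acyclicity of the directed graph (A, Att ∪ Supp). -/
def Acyclic (G : QBAG) : Prop := ∀ x, ¬ Relation.TransGen G.edge x x

/-- Direct attackers of an argument. -/
def attackers (G : QBAG) (a : ℕ) : Finset ℕ :=
  (G.att.filter (fun p => p.2 = a)).image Prod.fst

/-- Direct supporters of an argument. -/
def supporters (G : QBAG) (a : ℕ) : Finset ℕ :=
  (G.supp.filter (fun p => p.2 = a)).image Prod.fst

/-- Restriction G↓S of a QBAG to a subset S of the arguments. -/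
def restrict (G : QBAG) (S : Finset ℕ) : QBAG where
  args := G.args ∩ S
  tau := G.tau
  att := G.att.filter (fun p => p.1 ∈ S ∧ p.2 ∈ S)
  supp := G.supp.filter (fun p => p.1 ∈ S ∧ p.2 ∈ S)

/-- G⁻: the QBAG G with every attack and support edge pointing into x removed. -/
def dropInto (G : QBAG) (x : ℕ) : QBAG where
  args := G.args
  tau := G.tau
  att := G.att.filter (fun p => p.2 ≠ x)
  supp := G.supp.filter (fun p => p.2 ≠ x)

/-- G[x←ε]: the QBAG G with the initial strength of x replaced by ε. -/
def setTau (G : QBAG) (x : ℕ) (ε : ℝ) : QBAG where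
  args := G.args
  tau := Function.update G.tau x ε
  att := G.att
  supp := G.supp

end QBAG

noncomputable section

/-- Sum aggregation. -/
def sumAgg (G : QBAG) (s : ℕ → ℝ) (a : ℕ) : ℝ :=
  (∑ y ∈ G.supporters a, s y) - (∑ y ∈ G.attackers a, s y)

/-- Product aggregation. -/
def prodAgg (G : QBAG) (s : ℕ → ℝ) (a : ℕ) : ℝ :=
  (∏ y ∈ G.attackers a, (1 - s y)) - (∏ y ∈ G.supporters a, (1 - s y))

/-- Top aggregation. -/
def topAgg (G : QBAG) (s : ℕ → ℝ) (a : ℕ) : ℝ :=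
  (G.supporters a).fold max 0 s - (G.attackers a).fold max 0 s

/-- h for the 2-Max(1) influence function. -/
def h2 (x : ℝ) : ℝ := max 0 x ^ 2 / (1 + max 0 x ^ 2)

/-- h for the 1-Max(1) influence function. -/
def h1 (x : ℝ) : ℝ := max 0 x / (1 + max 0 x)

/-- 2-Max(1) influence function (used by QE). -/
def iotaQE (w s : ℝ) : ℝ := w - w * h2 (-s) + (1 - w) * h2 s

/-- Linear(1) influence function (used by DFQuAD). -/
def iotaLin (w s : ℝ) : ℝ := w - w * max 0 (-s) + (1 - w) * max 0 s

/-- 1-Max(1) influence function (used by SD-DFQuAD). -/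
def iotaSD (w s : ℝ) : ℝ := w - w * h1 (-s) + (1 - w) * h1 s

/-- Euler-based influence function (used by EB and EBT). -/
def iotaEB (w s : ℝ) : ℝ := 1 - (1 - w ^ 2) / (1 + w * Real.exp s)

/-- σ is a modular semantics with aggregation `agg` and influence `iota`:
on every well-formed acyclic QBAG the final strengths satisfy the defining equations. -/
def IsSemantics (agg : QBAG → (ℕ → ℝ) → ℕ → ℝ) (iota : ℝ → ℝ → ℝ)
    (σ : QBAG → ℕ → ℝ) : Prop :=
  ∀ G : QBAG, G.WF → G.Acyclic → ∀ a ∈ G.args, σ G a = iota (G.tau a) (agg G (σ G) a)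

/-- QE semantics. -/
def IsQE (σ : QBAG → ℕ → ℝ) : Prop := IsSemantics sumAgg iotaQE σ

/-- DFQuAD semantics. -/
def IsDF (σ : QBAG → ℕ → ℝ) : Prop := IsSemantics prodAgg iotaLin σ

/-- SD-DFQuAD semantics. -/
def IsSD (σ : QBAG → ℕ → ℝ) : Prop := IsSemantics prodAgg iotaSD σ

/-- EB semantics. -/
def IsEB (σ : QBAG → ℕ → ℝ) : Prop := IsSemantics sumAgg iotaEB σ

/-- EBT semantics. -/
def IsEBT (σ : QBAG → ℕ → ℝ) : Prop := IsSemantics topAgg iotaEB σ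

/-- A gradual semantics assigns final strengths in [0,1] on acyclic QBAGs. -/
def IsGradualSemantics (σ : QBAG → ℕ → ℝ) : Prop :=
  ∀ G : QBAG, G.WF → G.Acyclic → ∀ a ∈ G.args, σ G a ∈ Set.Icc (0 : ℝ) 1

/-- Removal-based contribution: ctrb^r_{G,a}(x) = σ_G(a) − σ_{G↓(A∖{x})}(a). -/
def ctrbR (σ : QBAG → ℕ → ℝ) (G : QBAG) (a x : ℕ) : ℝ :=
  σ G a - σ (G.restrict (G.args.erase x)) a

/-- Intrinsic-removal contribution: ctrb^{ri}_{G,a}(x) = σ_{G⁻}(a) − σ_{G↓(A∖{x})}(a). -/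
def ctrbRI (σ : QBAG → ℕ → ℝ) (G : QBAG) (a x : ℕ) : ℝ :=
  σ (G.dropInto x) a - σ (G.restrict (G.args.erase x)) a

/-- Shapley-based contribution. -/
def ctrbS (σ : QBAG → ℕ → ℝ) (G : QBAG) (a x : ℕ) : ℝ :=
  ∑ X ∈ ((G.args.erase a).erase x).powerset,
    ((X.card.factorial : ℝ) * ((G.args.erase a).card - X.card - 1).factorial /
      (G.args.erase a).card.factorial) *
    (σ (G.restrict (G.args \ X)) a - σ (G.restrict (G.args \ insert x X)) a)

/-- Gradient-based contribution: the derivative at ε = τ(x) (within [0,1]) of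
the map ε ↦ σ_{G[x←ε]}(a). -/
def ctrbG (σ : QBAG → ℕ → ℝ) (G : QBAG) (a x : ℕ) : ℝ :=
  derivWithin (fun ε => σ (G.setTau x ε) a) (Set.Icc (0 : ℝ) 1) (G.tau x)

/-- The contribution existence principle. -/
def ContributionExistence (ctrb : QBAG → ℕ → ℕ → ℝ) (σ : QBAG → ℕ → ℝ) : Prop :=
  ∀ G : QBAG, G.WF → G.Acyclic → ∀ a ∈ G.args,
    σ G a ≠ G.tau a → ∃ x ∈ G.args, x ≠ a ∧ ctrb G a x ≠ 0

/-- The quantitative contribution existence principle. -/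
def QuantContributionExistence (ctrb : QBAG → ℕ → ℕ → ℝ) (σ : QBAG → ℕ → ℝ) : Prop :=
  ∀ G : QBAG, G.WF → G.Acyclic → ∀ a ∈ G.args,
    ∑ x ∈ G.args.erase a, ctrb G a x = σ G a - G.tau a

/-- The strong faithfulness principle. -/
def StrongFaithfulness (ctrb : QBAG → ℕ → ℕ → ℝ) (σ : QBAG → ℕ → ℝ) : Prop :=
  ∀ G : QBAG, G.WF → G.Acyclic → ∀ a ∈ G.args, ∀ x ∈ G.args,
    ∀ ε ∈ Set.Icc (0 : ℝ) 1,
      (ctrb G a x < 0 →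
        (ε < G.tau x → σ G a < σ (G.setTau x ε) a) ∧
        (ε > G.tau x → σ G a > σ (G.setTau x ε) a)) ∧
      (ctrb G a x = 0 → σ G a = σ (G.setTau x ε) a) ∧
      (ctrb G a x > 0 →
        (ε < G.tau x → σ G a > σ (G.setTau x ε) a) ∧
        (ε > G.tau x → σ G a < σ (G.setTau x ε) a))

/-- The local faithfulness principle. -/
def LocalFaithfulness (ctrb : QBAG → ℕ → ℕ → ℝ) (σ : QBAG → ℕ → ℝ) : Prop :=
  ∀ G : QBAG, G.WF → G.Acyclic → ∀ a ∈ G.args, ∀ x ∈ G.args,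
    ∃ δ > 0, ∀ ε ∈ Set.Icc (G.tau x - δ) (G.tau x + δ) ∩ Set.Icc (0 : ℝ) 1,
      (ctrb G a x < 0 →
        (ε < G.tau x → σ G a < σ (G.setTau x ε) a) ∧
        (ε > G.tau x → σ G a > σ (G.setTau x ε) a)) ∧
      (ctrb G a x > 0 →
        (ε < G.tau x → σ G a > σ (G.setTau x ε) a) ∧
        (ε > G.tau x → σ G a < σ (G.setTau x ε) a))

/-- The quantitative local faithfulness principle: the map ε ↦ σ_{G[x←ε]}(a) is
differentiable (within [0,1]) at τ(x) with derivative ctrb_{G,a}(x); equivalently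
σ_{G[x←τ(x)+ε]}(a) = σ_G(a) + ε·ctrb_{G,a}(x) + e(ε) with e(ε)/ε → 0. -/
def QuantLocalFaithfulness (ctrb : QBAG → ℕ → ℕ → ℝ) (σ : QBAG → ℕ → ℝ) : Prop :=
  ∀ G : QBAG, G.WF → G.Acyclic → ∀ a ∈ G.args, ∀ x ∈ G.args,
    HasDerivWithinAt (fun ε => σ (G.setTau x ε) a) (ctrb G a x)
      (Set.Icc (0 : ℝ) 1) (G.tau x)

/-- The counterfactuality principle. -/
def Counterfactuality (ctrb : QBAG → ℕ → ℕ → ℝ) (σ : QBAG → ℕ → ℝ) : Prop :=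
  ∀ G : QBAG, G.WF → G.Acyclic → ∀ a ∈ G.args, ∀ x ∈ G.args,
    (ctrb G a x < 0 → σ G a < σ (G.restrict (G.args.erase x)) a) ∧
    (ctrb G a x = 0 → σ G a = σ (G.restrict (G.args.erase x)) a) ∧
    (ctrb G a x > 0 → σ G a > σ (G.restrict (G.args.erase x)) a)

/-- The quantitative counterfactuality principle. -/
def QuantCounterfactuality (ctrb : QBAG → ℕ → ℕ → ℝ) (σ : QBAG → ℕ → ℝ) : Prop :=
  ∀ G : QBAG, G.WF → G.Acyclic → ∀ a ∈ G.args, ∀ x ∈ G.args,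
    ctrb G a x = σ G a - σ (G.restrict (G.args.erase x)) a

end

/-!
Let `a = 0` be attacked by `b = 1` and `c = 2`, with `τ(a) = 1/2` and `τ(b) = τ(c) = 1`. The
attackers are unattacked, so they keep their initial strengths. Perturbing `τ(b)` leaves `c` at
full strength and vice versa, and one full-strength attacker already saturates product and top
aggregation at `-1`. So `σ(a) = ι_{1/2}(-1) < 1/2` is constant in `τ(b)` and in `τ(c)`, and all
gradient-based contributions to `a` vanish.
-/

namespace QBAG

variable {G : QBAG} {x : ℕ} {ε : ℝ}

theorem setTau_tau_self : G.setTau x (G.tau x) = G := by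
  cases G
  simp [setTau]

theorem WF.setTau (hG : G.WF) (hε : ε ∈ Set.Icc (0 : ℝ) 1) : (G.setTau x ε).WF := by
  refine ⟨hG.1, hG.2.1, hG.2.2.1, fun a ha => ?_⟩
  by_cases hax : a = x
  · subst hax
    simpa [QBAG.setTau] using hε
  · simpa [QBAG.setTau, Function.update_of_ne hax] using hG.2.2.2 a ha

theorem Acyclic.setTau (hG : G.Acyclic) : (G.setTau x ε).Acyclic := hG

theorem acyclic_of_rank (rank : ℕ → ℕ) (h : ∀ u v, G.edge u v → rank u < rank v) :
    G.Acyclic := by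
  have hpath : ∀ u v, Relation.TransGen G.edge u v → rank u < rank v := by
    intro u v huv
    induction huv with
    | single huv => exact h _ _ huv
    | tail _ hvw ih => exact ih.trans (h _ _ hvw)
  exact fun u hu => (hpath u u hu).false

end QBAG

section Aggregation

variable {G : QBAG} {s : ℕ → ℝ} {a y : ℕ}

theorem prodAgg_eq_zero_of_isolated (hatt : G.attackers a = ∅) (hsupp : G.supporters a = ∅) :
    prodAgg G s a = 0 := by
  simp [prodAgg, hatt, hsupp]

theorem topAgg_eq_zero_of_isolated (hatt : G.attackers a = ∅) (hsupp : G.supporters a = ∅) :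
    topAgg G s a = 0 := by
  simp [topAgg, hatt, hsupp]

theorem prodAgg_eq_neg_one (hsupp : G.supporters a = ∅) (hy : y ∈ G.attackers a) (hs : s y = 1) :
    prodAgg G s a = -1 := by
  rw [prodAgg, hsupp, prod_empty, prod_eq_zero hy (by rw [hs, sub_self])]
  norm_num

theorem topAgg_eq_neg_one (hsupp : G.supporters a = ∅) (hle : ∀ z ∈ G.attackers a, s z ≤ 1)
    (hy : y ∈ G.attackers a) (hs : s y = 1) : topAgg G s a = -1 := by
  have hmax : (G.attackers a).fold max 0 s = 1 :=
    le_antisymm ((fold_max_le 1).2 ⟨zero_le_one, hle⟩) ((le_fold_max 1).2 (Or.inr ⟨y, hy, hs.ge⟩))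
  rw [topAgg, hsupp, fold_empty, hmax]
  norm_num

end Aggregation

section Influence

variable {w s : ℝ}

theorem iotaLin_zero : iotaLin w 0 = w := by
  simp [iotaLin]

theorem iotaSD_zero : iotaSD w 0 = w := by
  simp [iotaSD, h1]

theorem iotaEB_zero (hw : 0 ≤ w) : iotaEB w 0 = w := by
  have hw1 : (1 : ℝ) + w ≠ 0 := by linarith
  rw [iotaEB, Real.exp_zero, mul_one]
  field_simp
  ring

theorem iotaLin_lt_self (hw : 0 < w) (hs : s < 0) : iotaLin w s < w := by
  rw [iotaLin, max_eq_right (neg_nonneg.2 hs.le), max_eq_left hs.le]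
  nlinarith

theorem iotaSD_lt_self (hw : 0 < w) (hs : s < 0) : iotaSD w s < w := by
  have hpos : 0 < h1 (-s) := by
    rw [h1, max_eq_right (neg_nonneg.2 hs.le)]
    exact div_pos (by linarith) (by linarith)
  have hzero : h1 s = 0 := by simp [h1, max_eq_left hs.le]
  rw [iotaSD, hzero]
  nlinarith

theorem iotaEB_lt_self (hw0 : 0 < w) (hw1 : w < 1) (hs : s < 0) : iotaEB w s < w := by
  have hexp : w * Real.exp s < w * 1 := mul_lt_mul_of_pos_left (Real.exp_lt_one_iff.2 hs) hw0
  calc iotaEB w s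
      < iotaEB w 0 := by
        rw [iotaEB, iotaEB, Real.exp_zero]
        have := div_lt_div_of_pos_left (by nlinarith : (0 : ℝ) < 1 - w ^ 2)
          (by positivity : (0 : ℝ) < 1 + w * Real.exp s)
          (by linarith : 1 + w * Real.exp s < 1 + w * 1)
        linarith
    _ = w := iotaEB_zero hw0.le

end Influence

def ContributionExistenceCounterexample (ctrb : QBAG → ℕ → ℕ → ℝ) (σ : QBAG → ℕ → ℝ) : Prop :=
  ∃ G : QBAG, G.WF ∧ G.Acyclic ∧ ∃ a ∈ G.args,
    σ G a ≠ G.tau a ∧ ∀ x ∈ G.args, x ≠ a → ctrb G a x = 0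

section Principles

variable {ctrb : QBAG → ℕ → ℕ → ℝ} {σ : QBAG → ℕ → ℝ}

theorem not_contributionExistence (h : ContributionExistenceCounterexample ctrb σ) :
    ¬ ContributionExistence ctrb σ := by
  obtain ⟨G, hWF, hAc, a, ha, hne, hzero⟩ := h
  intro hCE
  obtain ⟨x, hx, hxa, hx0⟩ := hCE G hWF hAc a ha hne
  exact hx0 (hzero x hx hxa)

theorem not_quantContributionExistence (h : ContributionExistenceCounterexample ctrb σ) :
    ¬ QuantContributionExistence ctrb σ := by
  obtain ⟨G, hWF, hAc, a, ha, hne, hzero⟩ := h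
  intro hQCE
  have hsum : ∑ x ∈ G.args.erase a, ctrb G a x = 0 :=
    sum_eq_zero fun x hx => hzero x (mem_of_mem_erase hx) (ne_of_mem_erase hx)
  exact hne (sub_eq_zero.1 ((hQCE G hWF hAc a ha).symm.trans hsum))

end Principles

theorem ctrbG_eq_zero_of_forall_setTau_eq {σ : QBAG → ℕ → ℝ} {G : QBAG} {a x : ℕ} {c : ℝ}
    (h : ∀ ε ∈ Set.Icc (0 : ℝ) 1, σ (G.setTau x ε) a = c) (hx : G.tau x ∈ Set.Icc (0 : ℝ) 1) :
    ctrbG σ G a x = 0 := by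
  rw [ctrbG, derivWithin_congr h (h _ hx), derivWithin_fun_const, Pi.zero_apply]

noncomputable def twoAttackers : QBAG :=
  ⟨{0, 1, 2}, fun n => if n = 0 then 1 / 2 else 1, {(1, 0), (2, 0)}, ∅⟩

theorem twoAttackers_WF : twoAttackers.WF := by
  refine ⟨by decide, by decide, by simp [twoAttackers], fun n _ => ?_⟩
  simp only [twoAttackers]
  split_ifs <;> norm_num

theorem twoAttackers_acyclic : twoAttackers.Acyclic := by
  refine QBAG.acyclic_of_rank (fun n => if n = 0 then 1 else 0) fun u v huv => ?_
  rcases huv with huv | huv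
  · simp only [twoAttackers, mem_insert, mem_singleton, Prod.ext_iff] at huv
    rcases huv with ⟨rfl, rfl⟩ | ⟨rfl, rfl⟩ <;> decide
  · simp [twoAttackers] at huv

theorem twoAttackers_supporters (a : ℕ) : twoAttackers.supporters a = ∅ := by
  simp [QBAG.supporters, twoAttackers]

theorem twoAttackers_attackers_zero : twoAttackers.attackers 0 = {1, 2} := by decide

theorem twoAttackers_attackers_of_ne_zero {y : ℕ} (hy : y ≠ 0) : twoAttackers.attackers y = ∅ := by
  simp [QBAG.attackers, twoAttackers, filter_insert, hy.symm]

section Saturation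

variable {agg : QBAG → (ℕ → ℝ) → ℕ → ℝ} {ι : ℝ → ℝ → ℝ} {σ : QBAG → ℕ → ℝ}

theorem sigma_twoAttackers_setTau (hσ : IsSemantics agg ι σ)
    (hiso : ∀ G s a, G.attackers a = ∅ → G.supporters a = ∅ → agg G s a = 0)
    (hsat : ∀ G s a y, G.supporters a = ∅ → (∀ z ∈ G.attackers a, s z ≤ 1) →
      y ∈ G.attackers a → s y = 1 → agg G s a = -1)
    (hι0 : ∀ w ∈ Set.Icc (0 : ℝ) 1, ι w 0 = w)
    {x : ℕ} (hx : x = 1 ∨ x = 2) {ε : ℝ} (hε : ε ∈ Set.Icc (0 : ℝ) 1) :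
    σ (twoAttackers.setTau x ε) 0 = ι (1 / 2) (-1) := by
  set G := twoAttackers.setTau x ε
  have hWF : G.WF := twoAttackers_WF.setTau hε
  have hAc : G.Acyclic := twoAttackers_acyclic.setTau
  have hsupp : ∀ a, G.supporters a = ∅ := twoAttackers_supporters
  have hatt : G.attackers 0 = {1, 2} := twoAttackers_attackers_zero
  have hargs : ∀ y ∈ G.attackers 0, y ≠ 0 ∧ y ∈ G.args := by
    rw [hatt]
    show ∀ y ∈ ({1, 2} : Finset ℕ), y ≠ 0 ∧ y ∈ twoAttackers.args
    decide
  have hroot : ∀ y ∈ G.attackers 0, σ G y = G.tau y := fun y hy => by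
    obtain ⟨hy0, hyG⟩ := hargs y hy
    rw [hσ G hWF hAc y hyG, hiso G _ y (twoAttackers_attackers_of_ne_zero hy0) (hsupp y),
      hι0 _ (hWF.2.2.2 y hyG)]
  have hle : ∀ z ∈ G.attackers 0, σ G z ≤ 1 := fun z hz =>
    (hroot z hz).trans_le (hWF.2.2.2 z (hargs z hz).2).2
  obtain ⟨y, hy, hyx⟩ : ∃ y ∈ G.attackers 0, y ≠ x := by
    rw [hatt]; rcases hx with rfl | rfl
    exacts [⟨2, by decide, by decide⟩, ⟨1, by decide, by decide⟩]
  have hfull : σ G y = 1 := by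
    rw [hroot y hy]
    simp only [hatt] at hy
    simp only [mem_insert, mem_singleton] at hy
    rcases hy with rfl | rfl <;> simp [G, QBAG.setTau, Function.update_of_ne hyx, twoAttackers]
  have htau : G.tau 0 = 1 / 2 := by
    have h0x : (0 : ℕ) ≠ x := by rcases hx with rfl | rfl <;> decide
    simp [G, QBAG.setTau, Function.update_of_ne h0x, twoAttackers]
  rw [hσ G hWF hAc 0 (by decide : 0 ∈ twoAttackers.args), hsat G _ 0 y (hsupp 0) hle hy hfull,
    htau]

theorem contributionExistenceCounterexample_ctrbG (hσ : IsSemantics agg ι σ)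
    (hiso : ∀ G s a, G.attackers a = ∅ → G.supporters a = ∅ → agg G s a = 0)
    (hsat : ∀ G s a y, G.supporters a = ∅ → (∀ z ∈ G.attackers a, s z ≤ 1) →
      y ∈ G.attackers a → s y = 1 → agg G s a = -1)
    (hι0 : ∀ w ∈ Set.Icc (0 : ℝ) 1, ι w 0 = w) (hι : ι (1 / 2) (-1) ≠ 1 / 2) :
    ContributionExistenceCounterexample (ctrbG σ) σ := by
  have hconst : ∀ x, x = 1 ∨ x = 2 → ∀ ε ∈ Set.Icc (0 : ℝ) 1,
      σ (twoAttackers.setTau x ε) 0 = ι (1 / 2) (-1) :=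
    fun x hx ε hε => sigma_twoAttackers_setTau hσ hiso hsat hι0 hx hε
  refine ⟨twoAttackers, twoAttackers_WF, twoAttackers_acyclic, 0, by decide, ?_, fun x hx hx0 => ?_⟩
  · have hσ0 := hconst 1 (Or.inl rfl) (twoAttackers.tau 1) (twoAttackers_WF.2.2.2 1 (by decide))
    rw [QBAG.setTau_tau_self] at hσ0
    rwa [hσ0, show twoAttackers.tau 0 = 1 / 2 by simp [twoAttackers]]
  · have h12 : x = 1 ∨ x = 2 := by
      simp only [twoAttackers, mem_insert, mem_singleton] at hx
      omega
    exact ctrbG_eq_zero_of_forall_setTau_eq (hconst x h12) (twoAttackers_WF.2.2.2 x hx)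

end Saturation

/-- The gradient-based contribution function violates contribution existence
(and hence quantitative contribution existence) w.r.t. each of the DFQuAD, SD-DFQuAD, and
EBT semantics. -/
theorem ctrbG_violates_contribution_existence_DF_SD_EBT :
    ∀ σ : QBAG → ℕ → ℝ, (IsDF σ ∨ IsSD σ ∨ IsEBT σ) →
      ¬ ContributionExistence (ctrbG σ) σ ∧
      ¬ QuantContributionExistence (ctrbG σ) σ ∧
      ∃ G : QBAG, G.WF ∧ G.Acyclic ∧ ∃ a ∈ G.args,
        σ G a ≠ G.tau a ∧ ∀ x ∈ G.args, x ≠ a → ctrbG σ G a x = 0 := by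
  intro σ hσ
  have hhalf : (0 : ℝ) < 1 / 2 := by norm_num
  have hneg : (-1 : ℝ) < 0 := by norm_num
  have hcex : ContributionExistenceCounterexample (ctrbG σ) σ := by
    rcases hσ with hσ | hσ | hσ
    · exact contributionExistenceCounterexample_ctrbG hσ
        (fun _ _ _ => prodAgg_eq_zero_of_isolated) (fun _ _ _ _ hsupp _ => prodAgg_eq_neg_one hsupp)
        (fun _ _ => iotaLin_zero) (iotaLin_lt_self hhalf hneg).ne
    · exact contributionExistenceCounterexample_ctrbG hσ
        (fun _ _ _ => prodAgg_eq_zero_of_isolated) (fun _ _ _ _ hsupp _ => prodAgg_eq_neg_one hsupp)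
        (fun _ _ => iotaSD_zero) (iotaSD_lt_self hhalf hneg).ne
    · exact contributionExistenceCounterexample_ctrbG hσ
        (fun _ _ _ => topAgg_eq_zero_of_isolated) (fun _ _ _ _ => topAgg_eq_neg_one)
        (fun _ hw => iotaEB_zero hw.1) (iotaEB_lt_self hhalf (by norm_num) hneg).ne
  exact ⟨not_contributionExistence hcex, not_quantContributionExistence hcex, hcex⟩
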